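/- Let X be a finite group with non-conjugate Carter subgroups H and K, minimal among such groups in the sense that for every proper subgroup and proper quotient Carter subgroups are conjugate, and let B be a minimal normal subgroup of X. Then X = BH and X = BK. -/

import Mathlib

open Pointwise

/-- A Carter subgroup: a nilpotent self-normalizing subgroup. -/
def IsCarter {G : Type*} [Group G] (H : Subgroup G) : Prop :=
  Group.IsNilpotent H ∧ Subgroup.normalizer (H : Set G) = H

/-!
Suppose `H ⊔ B` is proper. If `x` normalizes `H` modulo `B`, then `Hˣ ≤ H ⊔ B`, and conjugacy of
Carter subgroups in `H ⊔ B` gives `m ∈ H ⊔ B` with `m * x ∈ N(H) = H`; hence the image of `H` in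
`X ⧸ B` is a Carter subgroup. So is the image of `K`, by the same argument or because it is the
whole (nilpotent) quotient. Conjugacy in `X ⧸ B` gives `x` with `Hˣ ⊔ B = K ⊔ B`, a proper subgroup
since `H ⊔ B` is, and conjugacy inside it makes `H` and `K` conjugate.
-/

def CarterSubgroupsConjugate (G : Type*) [Group G] : Prop :=
  ∀ K₁ K₂ : Subgroup G, IsCarter K₁ → IsCarter K₂ → ∃ g : G, MulAut.conj g • K₁ = K₂

namespace Subgroup

variable {G G' : Type*} [Group G] [Group G']

theorem conj_smul_eq_self_iff {g : G} {H : Subgroup G} :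
    MulAut.conj g • H = H ↔ g ∈ normalizer (H : Set G) :=
  mem_normalizer_iff_map_conj_eq.symm

theorem map_conj_smul (f : G →* G') (g : G) (H : Subgroup G) :
    (MulAut.conj g • H).map f = MulAut.conj (f g) • H.map f := by
  change (H.map (MulAut.conj g).toMonoidHom).map f = (H.map f).map (MulAut.conj (f g)).toMonoidHom
  rw [map_map, map_map]
  congr 1
  ext x
  simp

end Subgroup

section Carter

variable {G : Type*} [Group G]

theorem IsCarter.conj_smul {H : Subgroup G} (hH : IsCarter H) (x : G) :
    IsCarter (MulAut.conj x • H) := by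
  have := hH.1
  refine ⟨Group.nilpotent_of_mulEquiv (Subgroup.equivSMul (MulAut.conj x) H), ?_⟩
  change Subgroup.normalizer ((H.map (MulAut.conj x).toMonoidHom : Subgroup G) : Set G) = _
  rw [← Subgroup.map_equiv_normalizer_eq H (MulAut.conj x), hH.2]
  rfl

theorem IsCarter.subgroupOf {H M : Subgroup G} (hH : IsCarter H) (hHM : H ≤ M) :
    IsCarter (H.subgroupOf M) := by
  have := hH.1
  exact ⟨Group.nilpotent_of_mulEquiv (Subgroup.subgroupOfEquivOfLe hHM).symm,
    by rw [← Subgroup.subgroupOf_normalizer_eq hHM, hH.2]⟩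

theorem CarterSubgroupsConjugate.exists_mem_conj_smul_eq {M H₁ H₂ : Subgroup G}
    (hM : CarterSubgroupsConjugate M) (h₁ : IsCarter H₁) (h₂ : IsCarter H₂)
    (hle₁ : H₁ ≤ M) (hle₂ : H₂ ≤ M) : ∃ m ∈ M, MulAut.conj m • H₁ = H₂ := by
  obtain ⟨m, hm⟩ := hM _ _ (h₁.subgroupOf hle₁) (h₂.subgroupOf hle₂)
  refine ⟨m, m.2, ?_⟩
  have := congrArg (Subgroup.map M.subtype) hm
  rwa [Subgroup.map_conj_smul, Subgroup.subgroupOf_map_subtype, Subgroup.subgroupOf_map_subtype,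
    inf_eq_left.mpr hle₁, inf_eq_left.mpr hle₂] at this

/-- Frattini argument. -/
theorem IsCarter.mem_of_conj_smul_le {H M : Subgroup G} (hH : IsCarter H)
    (hM : CarterSubgroupsConjugate M) (hHM : H ≤ M) {x : G} (hx : MulAut.conj x • H ≤ M) :
    x ∈ M := by
  obtain ⟨m, hmM, hm⟩ := hM.exists_mem_conj_smul_eq (hH.conj_smul x) hH hx hHM
  have hmx : m * x ∈ H := by
    rw [← hH.2, ← Subgroup.conj_smul_eq_self_iff, map_mul, mul_smul, hm]
  simpa using M.mul_mem (M.inv_mem hmM) (hHM hmx)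

theorem IsCarter.map_mk' {H B : Subgroup G} [B.Normal] (hH : IsCarter H)
    (hHB : H ⊔ B ≠ ⊤ → CarterSubgroupsConjugate ↥(H ⊔ B)) :
    IsCarter (H.map (QuotientGroup.mk' B)) := by
  set f := QuotientGroup.mk' B
  have := hH.1
  refine ⟨Group.nilpotent_of_surjective (f.subgroupMap H) (f.subgroupMap_surjective H), ?_⟩
  by_cases hHB_top : H ⊔ B = ⊤
  · have hmap : H.map f = ⊤ := by
      rw [← Subgroup.map_top_of_surjective f (QuotientGroup.mk'_surjective B),
        Subgroup.map_eq_map_iff, QuotientGroup.ker_mk', hHB_top, top_sup_eq]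
    rw [hmap, Subgroup.normalizer_eq_top]
  refine le_antisymm (fun y hy => ?_) Subgroup.le_normalizer
  obtain ⟨x, rfl⟩ := QuotientGroup.mk'_surjective B y
  have hsup : MulAut.conj x • H ⊔ B = H ⊔ B := by
    rw [← Subgroup.conj_smul_eq_self_iff, ← Subgroup.map_conj_smul, Subgroup.map_eq_map_iff,
      QuotientGroup.ker_mk'] at hy
    exact hy
  have hx : x ∈ H ⊔ B :=
    hH.mem_of_conj_smul_le (hHB hHB_top) le_sup_left (hsup ▸ le_sup_left)
  have hfx := Subgroup.mem_map_of_mem f hx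
  rwa [Subgroup.map_sup, (Subgroup.map_eq_bot_iff _).mpr (QuotientGroup.ker_mk' B).ge,
    sup_bot_eq] at hfx

theorem sup_eq_top_of_not_exists_conj_smul_eq
    (hsub : ∀ M : Subgroup G, M ≠ ⊤ → CarterSubgroupsConjugate M)
    {B : Subgroup G} [B.Normal] (hquot : CarterSubgroupsConjugate (G ⧸ B))
    {H K : Subgroup G} (hH : IsCarter H) (hK : IsCarter K)
    (hnc : ¬∃ x : G, MulAut.conj x • H = K) : B ⊔ H = ⊤ := by
  rw [sup_comm]
  by_contra hHB
  obtain ⟨q, hq⟩ := hquot _ _ (hH.map_mk' (hsub _)) (hK.map_mk' (hsub _))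
  obtain ⟨x, rfl⟩ := QuotientGroup.mk'_surjective B q
  have hsup : MulAut.conj x • H ⊔ B = K ⊔ B := by
    rwa [← Subgroup.map_conj_smul, Subgroup.map_eq_map_iff, QuotientGroup.ker_mk'] at hq
  by_cases hKB : K ⊔ B = ⊤
  · apply hHB
    have := congrArg (fun S => (MulAut.conj x)⁻¹ • S) (hsup.trans hKB)
    rwa [Subgroup.smul_sup, inv_smul_smul, ← map_inv, Subgroup.Normal.conj_smul_eq_self,
      Subgroup.Normal.conj_smul_eq_self] at this
  · obtain ⟨m, -, hm⟩ := (hsub _ hKB).exists_mem_conj_smul_eq (hH.conj_smul x) hK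
      (hsup ▸ le_sup_left) le_sup_left
    exact hnc ⟨m * x, by rw [map_mul, mul_smul, hm]⟩

end Carter

theorem sup_minimal_normal_eq_top_general {X : Type*} [Group X]
    (H K : Subgroup X) (hH : IsCarter H) (hK : IsCarter K)
    (hnc : ¬∃ x : X, MulAut.conj x • H = K)
    (hsub : ∀ M : Subgroup X, M ≠ ⊤ →
      ∀ K₁ K₂ : Subgroup M, IsCarter K₁ → IsCarter K₂ →
        ∃ m : M, MulAut.conj m • K₁ = K₂)
    (hquot : ∀ (N : Subgroup X) [N.Normal], N ≠ ⊥ →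
      ∀ K₁ K₂ : Subgroup (X ⧸ N), IsCarter K₁ → IsCarter K₂ →
        ∃ q : X ⧸ N, MulAut.conj q • K₁ = K₂)
    (B : Subgroup X) (hBn : B.Normal) (hBbot : B ≠ ⊥) :
    B ⊔ H = ⊤ ∧ B ⊔ K = ⊤ := by
  have hnc' : ¬∃ x : X, MulAut.conj x • K = H := fun ⟨x, hx⟩ =>
    hnc ⟨x⁻¹, by rw [← hx, ← mul_smul, ← map_mul, inv_mul_cancel, map_one, one_smul]⟩
  exact ⟨sup_eq_top_of_not_exists_conj_smul_eq hsub (hquot B hBbot) hH hK hnc,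
    sup_eq_top_of_not_exists_conj_smul_eq hsub (hquot B hBbot) hK hH hnc'⟩

theorem sup_minimal_normal_eq_top {X : Type*} [Group X] [Finite X]
    (H K : Subgroup X) (hH : IsCarter H) (hK : IsCarter K)
    (hnc : ¬∃ x : X, MulAut.conj x • H = K)
    (hsub : ∀ M : Subgroup X, M ≠ ⊤ →
      ∀ K₁ K₂ : Subgroup M, IsCarter K₁ → IsCarter K₂ →
        ∃ m : M, MulAut.conj m • K₁ = K₂)
    (hquot : ∀ (N : Subgroup X) [N.Normal], N ≠ ⊥ →
      ∀ K₁ K₂ : Subgroup (X ⧸ N), IsCarter K₁ → IsCarter K₂ →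
        ∃ q : X ⧸ N, MulAut.conj q • K₁ = K₂)
    (B : Subgroup X) (hBn : B.Normal) (hBbot : B ≠ ⊥)
    (hBmin : ∀ C : Subgroup X, C.Normal → C ≤ B → C ≠ ⊥ → C = B) :
    B ⊔ H = ⊤ ∧ B ⊔ K = ⊤ :=
  sup_minimal_normal_eq_top_general H K hH hK hnc hsub hquot B hBn hBbot
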